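/- For a smooth curve γ(s) = (z(s), t(s)) in ℂ* × ℝ, γ is horizontal (i.e., ⟨γ̇, 𝐓⟩ = 0, equivalently ṫ(s) = −2 Im(conj(z(s)) ż(s))) and in that case the horizontal length ∫ₐᵇ |ż(s)|/|z(s)| ds equals the hyperbolic length of the curve α∘γ in the left half-plane 𝓛, where α(z,t) = −|z|²+it and hyperbolic length of a curve ζ(s) in 𝓛 is ∫ |ζ̇(s)|/(−2 Re ζ(s)) ds. -/

import Mathlib

/-!
Along a curve `(z, t)` the Korányi map has derivative `-(‖z‖²)' + i ṫ = -2 Re(z̄ ż) + i ṫ`, so the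
horizontality condition `ṫ = -2 Im(z̄ ż)` says exactly that `(α ∘ γ)' = -2 z̄ ż`. Since
`-2 Re(α ∘ γ) = 2 ‖z‖²`, the hyperbolic length density `‖(α ∘ γ)'‖ / (-2 Re(α ∘ γ))` is then
`2 ‖z‖ ‖ż‖ / (2 ‖z‖²) = ‖ż‖ / ‖z‖`, pointwise.
-/

/-- The Korányi map α(z,t) = −|z|² + it. -/
noncomputable def Amap (p : ℂ × ℝ) : ℂ :=
  (-(‖p.1‖ ^ 2 : ℝ) : ℂ) + (p.2 : ℂ) * Complex.I

open Complex ComplexConjugate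

theorem amap_re (p : ℂ × ℝ) : (Amap p).re = -‖p.1‖ ^ 2 := by
  simp [Amap, -Complex.ofReal_pow]

theorem HasDerivAt.amap_comp {z : ℝ → ℂ} {t : ℝ → ℝ} {z' : ℂ} {t' s : ℝ}
    (hz : HasDerivAt z z' s) (ht : HasDerivAt t t' s) :
    HasDerivAt (fun u => Amap (z u, t u)) (-((2 * (conj (z s) * z').re : ℝ) : ℂ) + t' * I) s := by
  have hnormSq : HasDerivAt (‖z ·‖ ^ 2) (2 * (conj (z s) * z').re) s := by
    simpa [Complex.inner, mul_comm] using hz.norm_sq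
  exact hnormSq.ofReal_comp.neg.add (ht.ofReal_comp.mul_const I)

theorem HasDerivAt.amap_comp_of_horizontal {z : ℝ → ℂ} {t : ℝ → ℝ} {z' : ℂ} {t' s : ℝ}
    (hz : HasDerivAt z z' s) (ht : HasDerivAt t t' s)
    (hhor : t' = -2 * (conj (z s) * z').im) :
    HasDerivAt (fun u => Amap (z u, t u)) (-2 * (conj (z s) * z')) s := by
  refine (hz.amap_comp ht).congr_deriv ?_
  apply Complex.ext <;> simp [hhor]

theorem norm_div_neg_two_amap_re {w w' : ℂ} (hw : w ≠ 0) (τ : ℝ) :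
    ‖-2 * (conj w * w')‖ / (-2 * (Amap (w, τ)).re) = ‖w'‖ / ‖w‖ := by
  have hw' : ‖w‖ ≠ 0 := norm_ne_zero_iff.mpr hw
  rw [amap_re, norm_mul, norm_mul, Complex.norm_conj]
  field_simp
  norm_num
  ring

/-- For a smooth horizontal curve γ(s) = (z(s),t(s)) in ℂ* × ℝ (i.e. with
ṫ = −2 Im(z̄ ż)), the horizontal length ∫ₐᵇ |ż|/|z| ds equals the hyperbolic
length ∫ₐᵇ |d(α∘γ)/ds| / (−2 Re(α∘γ)) ds of α∘γ in 𝓛 = {Re ζ < 0}. -/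
theorem stmt_12 :
    ∀ (a b : ℝ) (z : ℝ → ℂ) (t : ℝ → ℝ),
      a ≤ b →
      (∀ s, z s ≠ 0) →
      ContDiff ℝ 1 z → ContDiff ℝ 1 t →
      (∀ s, deriv t s = -2 * (star (z s) * deriv z s).im) →
      (∫ s in a..b, ‖deriv z s‖ / ‖z s‖) =
        ∫ s in a..b,
          ‖deriv (fun u => Amap (z u, t u)) s‖ /
            (-2 * (Amap (z s, t s)).re) := by
  intro a b z t _ hz0 hz ht hhor
  refine intervalIntegral.integral_congr fun s _ => ?_
  have hAmap := ((hz.differentiable one_ne_zero) s).hasDerivAt.amap_comp_of_horizontal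
    ((ht.differentiable one_ne_zero) s).hasDerivAt (hhor s)
  simp only [hAmap.deriv, norm_div_neg_two_amap_re (hz0 s)]
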